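/- arXiv:1406.0690 — 3 statements merged into one kernel-verified Lean document; each statement's English description precedes it below -/
import Mathlib

section
/- Doubly-exponential lower bound for downward interiors of NFAs: for every n ≥ 3, let ℓ = ⌊(n−3)/2⌋, let Σ be an alphabet with 2^ℓ letters, and let L_n = Σ* \ {a a | a ∈ Σ} (all words over Σ except the two-letter words consisting of a repeated letter). Then nN(L_n) ≤ n, while the downward interior ↓int L_n equals the language V_Σ of words with pairwise distinct letters and nN(↓int L_n) = 2^{2^ℓ} = 2^{2^{⌊(n−3)/2⌋}}. -/
/-- An accepting run of an NFA on a word `w`: a sequence of `|w|+1` states starting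
in an initial state, ending in an accepting state, and following the transitions. -/
def NFA.IsAcceptingRun {α σ : Type*} (M : NFA α σ) (w : List α)
    (r : Fin (w.length + 1) → σ) : Prop :=
  r 0 ∈ M.start ∧ r (Fin.last w.length) ∈ M.accept ∧
    ∀ i : Fin w.length, r i.succ ∈ M.step (r i.castSucc) (w.get i)

/-- An NFA is unambiguous (a UFA) if every word has at most one accepting run. -/
def NFA.Unambiguous {α σ : Type*} (M : NFA α σ) : Prop :=
  ∀ (w : List α) (r₁ r₂ : Fin (w.length + 1) → σ),
    M.IsAcceptingRun w r₁ → M.IsAcceptingRun w r₂ → r₁ = r₂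

/-- A deterministic NFA (a DFA with a possibly partial transition function):
exactly one initial state and at most one successor per state and letter. -/
def NFA.Deterministic {α σ : Type*} (M : NFA α σ) : Prop :=
  (∃ q₀, M.start = {q₀}) ∧ ∀ q a, (M.step q a).Subsingleton

/-- Minimal number of states of an NFA recognizing `L` (`nN(L)`). -/
noncomputable def nN {α : Type} (L : Language α) : ℕ :=
  sInf {n | ∃ (σ : Type) (inst : Fintype σ) (M : NFA α σ),
    @Fintype.card σ inst = n ∧ M.accepts = L}

/-- Minimal number of states of a DFA (partial transition function allowed)
recognizing `L` (`nD(L)`). -/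
noncomputable def nD {α : Type} (L : Language α) : ℕ :=
  sInf {n | ∃ (σ : Type) (inst : Fintype σ) (M : NFA α σ),
    M.Deterministic ∧ @Fintype.card σ inst = n ∧ M.accepts = L}

/-- Minimal number of states of an unambiguous NFA recognizing `L` (`nU(L)`). -/
noncomputable def nU {α : Type} (L : Language α) : ℕ :=
  sInf {n | ∃ (σ : Type) (inst : Fintype σ) (M : NFA α σ),
    M.Unambiguous ∧ @Fintype.card σ inst = n ∧ M.accepts = L}

/-- Upward closure: all superwords (w.r.t. the scattered-subword ordering
`List.Sublist`) of words of `L`. -/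
def upClosure {α : Type} (L : Language α) : Language α := {x | ∃ y ∈ L, y.Sublist x}

/-- Downward closure: all subwords of words of `L`. -/
def downClosure {α : Type} (L : Language α) : Language α := {x | ∃ y ∈ L, x.Sublist y}

/-- Upward interior: words all of whose superwords are in `L`. -/
def upInterior {α : Type} (L : Language α) : Language α := {x | ∀ y, x.Sublist y → y ∈ L}

/-- Downward interior: words all of whose subwords are in `L`. -/
def downInterior {α : Type} (L : Language α) : Language α := {x | ∀ y, y.Sublist x → y ∈ L}

/-!
An NFA for `Σ* \ {aa | a ∈ Σ}` needs only logarithmically many states in `|Σ|`: after the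
first letter `a` it guesses a position `i` of the binary expansion of `a` and checks that the
second letter differs from `a` there, while three further states handle the lengths `0`, `1`
and `≥ 3`. A word has a subword `aa` exactly when it repeats a letter, so the downward
interior is the language of repetition-free words. The words `S ++ Sᶜ` (letters of `S`,
then of its complement) form a fooling set of size `2^|Σ|` for that language, since
`S ++ Tᶜ` is repetition-free iff `S ⊆ T`; hence every NFA for it has at least `2^|Σ|` states,
and the automaton remembering the set of letters read so far attains this.
-/

theorem downInterior_compl_doubledLetters {α : Type} :
    downInterior {w : List α | ¬∃ a, w = [a, a]} = {x | x.Nodup} := by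
  ext x
  simp only [downInterior, List.nodup_iff_sublist]
  constructor
  · exact fun h a ha => h _ ha ⟨a, rfl⟩
  · rintro h y hy ⟨a, rfl⟩
    exact h a hy

section

variable {α : Type} {L : Language α}

theorem nN_le_card {σ : Type} [Fintype σ] (M : NFA α σ) (hM : M.accepts = L) :
    nN L ≤ Fintype.card σ :=
  Nat.sInf_le ⟨σ, _, M, rfl, hM⟩

theorem le_nN {k : ℕ} {σ : Type} [Fintype σ] (M : NFA α σ) (hM : M.accepts = L)
    (h : ∀ (τ : Type) [Fintype τ] (N : NFA α τ), N.accepts = L → k ≤ Fintype.card τ) :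
    k ≤ nN L :=
  le_csInf ⟨Fintype.card σ, σ, inferInstance, M, rfl, hM⟩
    fun _ ⟨τ, _, N, hcard, hN⟩ => hcard ▸ h τ N hN

end

def Language.IsFoolingSet {α ι : Type*} (L : Language α) (u v : ι → List α) : Prop :=
  (∀ i, u i ++ v i ∈ L) ∧ ∀ i j, u i ++ v j ∈ L → u j ++ v i ∈ L → i = j

namespace NFA

variable {α σ : Type*}

theorem acceptsFrom_empty (M : NFA α σ) : M.acceptsFrom ∅ = 0 := by
  ext w
  rw [mem_acceptsFrom, evalFrom_eq_biUnion_singleton]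
  simp

theorem append_mem_accepts_iff (M : NFA α σ) {x y : List α} :
    x ++ y ∈ M.accepts ↔ ∃ q ∈ M.eval x, y ∈ M.acceptsFrom {q} := by
  rw [accepts_eq_acceptsFrom_start, append_mem_acceptsFrom,
    ← Set.biUnion_of_singleton (M.evalFrom M.start x), acceptsFrom_iUnion₂]
  exact Set.mem_iUnion₂.trans (by simp only [exists_prop]; rfl)

theorem card_le_card_of_isFoolingSet {ι : Type*} [Fintype σ] [Fintype ι] (M : NFA α σ)
    {u v : ι → List α} (h : M.accepts.IsFoolingSet u v) :
    Fintype.card ι ≤ Fintype.card σ := by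
  choose q hq hacc using fun i => M.append_mem_accepts_iff.1 (h.1 i)
  refine Fintype.card_le_of_injective q fun i j hij => h.2 i j ?_ ?_
  · exact M.append_mem_accepts_iff.2 ⟨q i, hq i, hij ▸ hacc j⟩
  · exact M.append_mem_accepts_iff.2 ⟨q j, hq j, hij ▸ hacc i⟩

end NFA

section

variable {α : Type*}

def nodupNFA (α : Type*) [DecidableEq α] : NFA α (Finset α) where
  step s a := {t | a ∉ s ∧ t = insert a s}
  start := {∅}
  accept := Set.univ

theorem mem_nodupNFA_acceptsFrom [DecidableEq α] {s : Finset α} {w : List α} :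
    w ∈ (nodupNFA α).acceptsFrom {s} ↔ w.Nodup ∧ ∀ a ∈ w, a ∉ s := by
  induction w generalizing s with
  | nil => simp [nodupNFA]
  | cons a w ih =>
    rw [NFA.cons_mem_acceptsFrom, NFA.stepSet_singleton]
    by_cases ha : a ∈ s
    · have hstep : (nodupNFA α).step s a = ∅ := by simp [nodupNFA, ha]
      simp [hstep, NFA.acceptsFrom_empty, ha]
    · have hstep : (nodupNFA α).step s a = {insert a s} := by ext; simp [nodupNFA, ha]
      rw [hstep, ih]
      simp only [List.nodup_cons, List.mem_cons, Finset.mem_insert]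
      grind

theorem nodupNFA_accepts [DecidableEq α] : (nodupNFA α).accepts = {w | w.Nodup} := by
  ext w
  exact mem_nodupNFA_acceptsFrom.trans (and_iff_left fun a _ => Finset.notMem_empty a)

theorem nodup_toList_append_toList_compl_iff [DecidableEq α] [Fintype α] {s t : Finset α} :
    (s.toList ++ tᶜ.toList).Nodup ↔ s ⊆ t := by
  simp only [List.nodup_append, Finset.nodup_toList, Finset.mem_toList, Finset.mem_compl,
    true_and]
  exact ⟨fun h a has => by_contra fun hat => h a has a hat rfl,
    fun h a has b hbt hab => hbt (hab ▸ h has)⟩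

theorem two_pow_card_le_card_of_accepts_eq_nodup [Fintype α] {σ : Type*} [Fintype σ]
    (M : NFA α σ) (hM : M.accepts = {w | w.Nodup}) :
    2 ^ Fintype.card α ≤ Fintype.card σ := by
  classical
  have hmem (s t : Finset α) : s.toList ++ tᶜ.toList ∈ M.accepts ↔ s ⊆ t := by
    rw [hM]; exact nodup_toList_append_toList_compl_iff
  have hfool : M.accepts.IsFoolingSet (fun s : Finset α => s.toList) (fun s => sᶜ.toList) :=
    ⟨fun s => (hmem s s).2 subset_rfl,
      fun s t hst hts => ((hmem s t).1 hst).antisymm ((hmem t s).1 hts)⟩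
  simpa using M.card_le_card_of_isFoolingSet hfool

end

theorem nN_setOf_nodup (α : Type) [Fintype α] :
    nN {w : List α | w.Nodup} = 2 ^ Fintype.card α := by
  classical
  refine le_antisymm ?_ (le_nN (nodupNFA α) nodupNFA_accepts
    fun _ _ N hN => two_pow_card_le_card_of_accepts_eq_nodup N hN)
  simpa using nN_le_card (nodupNFA α) nodupNFA_accepts

section

variable {α ι β : Type*}

/-- `inl none` is initial. After a first letter `a` the automaton may sit in `inr (i, code a i)`,
from which a second letter `c` leads to the accepting state `inl (some true)` only if
`code c i ≠ code a i`. Apart from that, `inl (some true)` is reached after one letter and, via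
`inl (some false)` (reached after at least two letters), after at least three. -/
def doubledLetterComplNFA (code : α → ι → β) : NFA α (Option Bool ⊕ (ι × β)) where
  step
    | .inl none, a => insert (.inl (some true)) (Set.range fun i => .inr (i, code a i))
    | .inl (some true), _ => {.inl (some false)}
    | .inl (some false), _ => {.inl (some false), .inl (some true)}
    | .inr (i, b), a => {q | code a i ≠ b ∧ q = .inl (some true)}
  start := {.inl none}
  accept := {.inl none, .inl (some true)}

variable {code : α → ι → β} {w : List α}

theorem mem_doubledLetterComplNFA_acceptsFrom_waiting :
    w ∈ (doubledLetterComplNFA code).acceptsFrom {.inl (some false)} ↔ w ≠ [] := by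
  induction w with
  | nil => rw [NFA.nil_mem_acceptsFrom]; simp [doubledLetterComplNFA]
  | cons a w ih =>
    have hstep : (doubledLetterComplNFA code).step (.inl (some false)) a =
      {.inl (some false)} ∪ {.inl (some true)} := rfl
    rw [NFA.cons_mem_acceptsFrom, NFA.stepSet_singleton, hstep, NFA.acceptsFrom_union,
      Language.mem_add, ih]
    rcases w with _ | ⟨b, w⟩
    · simp [doubledLetterComplNFA]
    · simp

theorem mem_doubledLetterComplNFA_acceptsFrom_final :
    w ∈ (doubledLetterComplNFA code).acceptsFrom {.inl (some true)} ↔ w.length ≠ 1 := by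
  rcases w with _ | ⟨a, w⟩
  · rw [NFA.nil_mem_acceptsFrom]; simp [doubledLetterComplNFA]
  · have hstep :
        (doubledLetterComplNFA code).step (.inl (some true)) a = {.inl (some false)} := rfl
    rw [NFA.cons_mem_acceptsFrom, NFA.stepSet_singleton, hstep,
      mem_doubledLetterComplNFA_acceptsFrom_waiting]
    simp [List.length_eq_zero_iff]

theorem mem_doubledLetterComplNFA_acceptsFrom_guess {i : ι} {b : β} :
    w ∈ (doubledLetterComplNFA code).acceptsFrom {.inr (i, b)} ↔
      ∃ a w', w = a :: w' ∧ code a i ≠ b ∧ w'.length ≠ 1 := by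
  rcases w with _ | ⟨a, w⟩
  · rw [NFA.nil_mem_acceptsFrom]; simp [doubledLetterComplNFA]
  · rw [NFA.cons_mem_acceptsFrom, NFA.stepSet_singleton]
    by_cases h : code a i = b
    · have hstep : (doubledLetterComplNFA code).step (.inr (i, b)) a = ∅ := by
        simp [doubledLetterComplNFA, h]
      simp [hstep, NFA.acceptsFrom_empty, h]
    · have hstep : (doubledLetterComplNFA code).step (.inr (i, b)) a = {.inl (some true)} := by
        ext; simp [doubledLetterComplNFA, h]
      simp [hstep, mem_doubledLetterComplNFA_acceptsFrom_final, h]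

theorem cons_mem_doubledLetterComplNFA_acceptsFrom_init {a : α} :
    a :: w ∈ (doubledLetterComplNFA code).acceptsFrom {.inl none} ↔
      w.length ≠ 1 ∨
        ∃ i, w ∈ (doubledLetterComplNFA code).acceptsFrom {.inr (i, code a i)} := by
  have hstep : (doubledLetterComplNFA code).step (.inl none) a =
      {.inl (some true)} ∪ ⋃ i, {.inr (i, code a i)} := by
    rw [Set.iUnion_singleton_eq_range]; rfl
  rw [NFA.cons_mem_acceptsFrom, NFA.stepSet_singleton, hstep, NFA.acceptsFrom_union,
    Language.mem_add, NFA.acceptsFrom_iUnion, mem_doubledLetterComplNFA_acceptsFrom_final]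
  exact or_congr_right Set.mem_iUnion

theorem doubledLetterComplNFA_accepts (hcode : Function.Injective code) :
    (doubledLetterComplNFA code).accepts = {w | ¬∃ a, w = [a, a]} := by
  ext w
  show _ ↔ ¬∃ a, w = [a, a]
  rw [NFA.accepts_eq_acceptsFrom_start]
  rcases w with _ | ⟨a, _ | ⟨b, _ | ⟨c, w⟩⟩⟩
  · rw [NFA.nil_mem_acceptsFrom]; simp [doubledLetterComplNFA]
  all_goals refine cons_mem_doubledLetterComplNFA_acceptsFrom_init.trans ?_
  · simp
  · simp only [mem_doubledLetterComplNFA_acceptsFrom_guess]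
    simp [← Function.ne_iff, hcode.ne_iff, eq_comm]
  · simp

end

/-- Doubly-exponential lower bound for downward interiors: for `n ≥ 3` and
`ℓ = ⌊(n-3)/2⌋`, over an alphabet with `2^ℓ` letters, the language
`L_n = Σ* \ { aa | a ∈ Σ }` satisfies `nN(L_n) ≤ n`, its downward interior is the
language of words with pairwise distinct letters, and `nN(↓int L_n) = 2^(2^ℓ)`. -/
theorem downInterior_doubly_exponential (n : ℕ) (hn : 3 ≤ n) (ℓ : ℕ)
    (hℓ : ℓ = (n - 3) / 2) (L : Language (Fin (2 ^ ℓ)))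
    (hL : L = {w | ¬ ∃ a : Fin (2 ^ ℓ), w = [a, a]}) :
    nN L ≤ n ∧
    downInterior L = {x | x.Nodup} ∧
    nN (downInterior L) = 2 ^ 2 ^ ℓ := by
  have hdown : downInterior L = {x | x.Nodup} := hL ▸ downInterior_compl_doubledLetters
  refine ⟨?_, hdown, ?_⟩
  · have hM :=
      doubledLetterComplNFA_accepts (finFunctionFinEquiv (m := 2) (n := ℓ)).symm.injective
    calc nN L ≤ Fintype.card (Option Bool ⊕ (Fin ℓ × Fin 2)) :=
          nN_le_card _ (hM.trans hL.symm)
      _ = 3 + ℓ * 2 := by simp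
      _ ≤ n := by omega
  · rw [hdown, nN_setOf_nodup, Fintype.card_fin]
end

section
/- Unambiguous state complexity of the downward-closed witness: for every n > 0, over the alphabet Σ_n = {a_1,…,a_n}, let D_n = {x ∈ Σ_n^+ | for all positions i > 1, x[i] ≠ x[1]}. Then every unambiguous finite automaton recognizing the downward closure ↓D_n has at least 2^n states; in fact nU(↓D_n) = 2^n. -/
/-!
Lower bound (Schmidt's rank argument): for an unambiguous automaton and families of words `u i`,
`v j`, the 0/1 matrix `[u i ++ v j ∈ L]` factors through the state space as `A * B`, with `A`
recording the states reached on `u i` and `B` whether `v j` is accepted from a state. The product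
has a 0/1 entry because by unambiguity at most one state can be the position after `u i` of an
accepting run of `u i ++ v j`. Hence the rank of that matrix is at most the number of states.

The downward closure of `D_n` consists of the words whose tail omits some letter. For finite sets
`S, T` of letters, take `u ∅ = []`, `u S = a :: Sᶜ` and `v T = T`: then `u S ++ v T` is accepted iff
`S = ∅ ∨ ¬ S ⊆ T`, a matrix which is invertible by Möbius inversion on the Boolean lattice.

Upper bound: a partial DFA whose state is the set of letters read after the first one.
-/

namespace NFA

variable {α σ : Type*} (M : NFA α σ)

/-- Runs are indexed by `ℕ` rather than `Fin (w.length + 1)`; values past the end are irrelevant,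
which makes concatenation free of index casts. -/
def IsRunOn (w : List α) (r : ℕ → σ) : Prop :=
  ∀ i (hi : i < w.length), r (i + 1) ∈ M.step (r i) w[i]

theorem mem_evalFrom_iff_exists_isRunOn {S : Set σ} {w : List α} {q : σ} :
    q ∈ M.evalFrom S w ↔ ∃ r, M.IsRunOn w r ∧ r 0 ∈ S ∧ r w.length = q := by
  induction w generalizing S with
  | nil =>
    refine ⟨fun hq => ⟨fun _ => q, nofun, hq, rfl⟩, ?_⟩
    rintro ⟨r, -, h0, rfl⟩
    exact h0
  | cons a w ih =>
    rw [evalFrom_cons, ih]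
    constructor
    · rintro ⟨r, hr, h0, hq⟩
      obtain ⟨p, hp, hstep⟩ := M.mem_stepSet.1 h0
      refine ⟨fun | 0 => p | i + 1 => r i, ?_, hp, hq⟩
      rintro (_ | i) hi
      · exact hstep
      · exact hr i (by simpa using hi)
    · rintro ⟨r, hr, h0, hq⟩
      exact ⟨fun i => r (i + 1), fun i hi => hr (i + 1) (by simpa using hi),
        M.mem_stepSet.2 ⟨r 0, h0, hr 0 (by simp)⟩, hq⟩

variable {M}

theorem IsRunOn.append {u v : List α} {r r' : ℕ → σ} (hr : M.IsRunOn u r)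
    (hr' : M.IsRunOn v r') (h : r u.length = r' 0) :
    ∃ R, M.IsRunOn (u ++ v) R ∧ (∀ i ≤ u.length, R i = r i) ∧ ∀ j, R (u.length + j) = r' j := by
  let R i := if i ≤ u.length then r i else r' (i - u.length)
  have hR : ∀ j, R (u.length + j) = r' j := by
    rintro (_ | j)
    · simp [R, h]
    · simp [R]
  refine ⟨R, fun i hi => ?_, fun i hi => if_pos hi, hR⟩
  rcases lt_or_ge i u.length with hiu | hiu
  · rw [List.getElem_append_left hiu]
    simpa [R, hiu.le, Nat.succ_le_of_lt hiu] using hr i hiu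
  · obtain ⟨j, rfl⟩ := Nat.exists_eq_add_of_le hiu
    rw [List.getElem_append_right (by omega), add_assoc, hR, hR]
    simpa using hr' j (by simp at hi; omega)

theorem IsRunOn.isAcceptingRun {w : List α} {r : ℕ → σ} (hr : M.IsRunOn w r)
    (h0 : r 0 ∈ M.start) (hf : r w.length ∈ M.accept) :
    M.IsAcceptingRun w (fun i => r i) :=
  ⟨h0, hf, fun i => hr i i.isLt⟩

theorem exists_isAcceptingRun_append {u v : List α} {p : σ} (hp : p ∈ M.eval u)
    (hv : v ∈ M.acceptsFrom {p}) :
    ∃ r : ℕ → σ, M.IsAcceptingRun (u ++ v) (fun i => r i) ∧ r u.length = p := by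
  obtain ⟨r, hr, h0, hp⟩ := (M.mem_evalFrom_iff_exists_isRunOn).1 hp
  obtain ⟨f, hf, hfv⟩ := hv
  obtain ⟨r', hr', h0', hf'⟩ := (M.mem_evalFrom_iff_exists_isRunOn).1 hfv
  obtain ⟨R, hR, hRr, hRr'⟩ := hr.append hr' (hp.trans h0'.symm)
  refine ⟨R, hR.isAcceptingRun ?_ ?_, by rw [hRr _ le_rfl, hp]⟩
  · rwa [hRr 0 (Nat.zero_le _)]
  · rwa [List.length_append, hRr', hf']

theorem mem_accepts_append_iff {u v : List α} :
    u ++ v ∈ M.accepts ↔ ∃ p ∈ M.eval u, v ∈ M.acceptsFrom {p} := by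
  rw [accepts_eq_acceptsFrom_start, append_mem_acceptsFrom]
  simp only [mem_acceptsFrom, mem_evalFrom_iff_exists (S := M.evalFrom M.start u)]
  exact ⟨fun ⟨f, hf, p, hp, hfp⟩ => ⟨p, hp, f, hf, hfp⟩,
    fun ⟨p, hp, f, hf, hfp⟩ => ⟨f, hf, p, hp, hfp⟩⟩

theorem Unambiguous.eq_of_mem_eval_of_mem_acceptsFrom (hM : M.Unambiguous) {u v : List α}
    {p q : σ} (hp : p ∈ M.eval u) (hpv : v ∈ M.acceptsFrom {p}) (hq : q ∈ M.eval u)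
    (hqv : v ∈ M.acceptsFrom {q}) : p = q := by
  obtain ⟨r, hr, rfl⟩ := exists_isAcceptingRun_append hp hpv
  obtain ⟨r', hr', rfl⟩ := exists_isAcceptingRun_append hq hqv
  simpa using congrFun (hM _ _ _ hr hr') ⟨u.length, by simp⟩

theorem Unambiguous.rank_le_card [Fintype σ] {ι κ K : Type*} [Fintype κ] [Field K]
    [DecidablePred (· ∈ M.accepts)] (hM : M.Unambiguous) (u : ι → List α) (v : κ → List α) :
    (Matrix.of fun i j => if u i ++ v j ∈ M.accepts then (1 : K) else 0).rank ≤
      Fintype.card σ := by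
  classical
  let A : Matrix ι σ K := .of fun i p => if p ∈ M.eval (u i) then 1 else 0
  let B : Matrix σ κ K := .of fun p j => if v j ∈ M.acceptsFrom {p} then 1 else 0
  have hAB : A * B = .of fun i j => if u i ++ v j ∈ M.accepts then 1 else 0 := by
    ext i j
    simp only [Matrix.mul_apply, A, B, Matrix.of_apply, ite_zero_mul_ite_zero, one_mul]
    split_ifs with hacc
    · obtain ⟨p, hp, hpv⟩ := mem_accepts_append_iff.1 hacc
      rw [Finset.sum_eq_single p (fun q _ hqp => if_neg fun hq =>
        hqp (hM.eq_of_mem_eval_of_mem_acceptsFrom hq.1 hq.2 hp hpv)) (by simp), if_pos ⟨hp, hpv⟩]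
    · exact Finset.sum_eq_zero fun p _ => if_neg fun hp => hacc (mem_accepts_append_iff.2 ⟨p, hp⟩)
  calc _ = (A * B).rank := by rw [hAB]
    _ ≤ A.rank := A.rank_mul_le_left B
    _ ≤ Fintype.card σ := A.rank_le_card_width

end NFA

theorem Finset.eq_zero_of_forall_sum_powerset_eq_zero {α β : Type*} [AddCommMonoid β]
    {f : Finset α → β} (h : ∀ T : Finset α, ∑ S ∈ T.powerset, f S = 0) : f = 0 := by
  funext T
  induction T using Finset.strongInduction with
  | H T ih =>
    calc f T = ∑ S ∈ T.powerset, f S :=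
          (Finset.sum_eq_single_of_mem T (Finset.mem_powerset_self T) fun S hS hST =>
            ih S (Finset.ssubset_iff_subset_ne.2 ⟨Finset.mem_powerset.1 hS, hST⟩)).symm
      _ = 0 := h T

theorem Matrix.isUnit_of_ite_eq_empty_or_not_subset {α K : Type*} [Fintype α] [DecidableEq α]
    [Field K] :
    IsUnit (Matrix.of fun S T : Finset α => if S = ∅ ∨ ¬ S ⊆ T then (1 : K) else 0) := by
  set G := Matrix.of fun S T : Finset α => if S = ∅ ∨ ¬ S ⊆ T then (1 : K) else 0
  rw [← Matrix.vecMul_injective_iff_isUnit, ← Matrix.coe_vecMulLinear, injective_iff_map_eq_zero]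
  intro x hx
  have hxG : ∀ T, ∑ S, x S * G S T = 0 := fun T => congrFun hx T
  have hsum : ∑ S, x S = 0 := by simpa [G, or_not] using hxG ∅
  let f S := if S = ∅ then 0 else x S
  have hf : ∀ T : Finset α, ∑ S ∈ T.powerset, f S = 0 := by
    intro T
    calc ∑ S ∈ T.powerset, f S = ∑ S, x S - ∑ S, x S * G S T := by
          rw [← Finset.filter_subset_univ, Finset.sum_filter, ← Finset.sum_sub_distrib]
          refine Finset.sum_congr rfl fun S _ => ?_
          by_cases hS : S = ∅ <;> by_cases hST : S ⊆ T <;> simp [f, G, hS, hST]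
      _ = 0 := by rw [hsum, hxG, sub_zero]
  have hx0 : ∀ S, S ≠ ∅ → x S = 0 := fun S hS => by
    simpa [f, hS] using congrFun (Finset.eq_zero_of_forall_sum_powerset_eq_zero hf) S
  funext S
  by_cases hS : S = ∅
  · subst hS
    rwa [Finset.sum_eq_single_of_mem ∅ (Finset.mem_univ _) fun S _ hS => hx0 S hS] at hsum
  · exact hx0 S hS

def tailMissesSomeLetter (α : Type*) : Language α := {x | ∃ b, b ∉ x.tail}

@[simp]
theorem mem_tailMissesSomeLetter {α : Type*} {x : List α} :
    x ∈ tailMissesSomeLetter α ↔ ∃ b, b ∉ x.tail := Iff.rfl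

theorem downClosure_eq_tailMissesSomeLetter {α : Type} :
    downClosure {x : List α | ∃ a w, x = a :: w ∧ a ∉ w} = tailMissesSomeLetter α := by
  ext x
  constructor
  · rintro ⟨_, ⟨a, w, rfl, haw⟩, hxw⟩
    exact ⟨a, fun hat => haw (hxw.tail.subset hat)⟩
  · rintro ⟨b, hb⟩
    rcases x with _ | ⟨c, t⟩
    · exact ⟨[b], ⟨b, [], rfl, List.not_mem_nil⟩, List.nil_sublist _⟩
    by_cases hbc : b = c
    · exact ⟨c :: t, ⟨c, t, rfl, hbc ▸ hb⟩, List.Sublist.refl _⟩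
    · exact ⟨b :: c :: t, ⟨b, c :: t, rfl, by simpa [hbc] using hb⟩, List.sublist_cons_self _ _⟩

theorem List.Nodup.mem_tailMissesSomeLetter {α : Type*} [Nonempty α] {l : List α}
    (hl : l.Nodup) : l ∈ tailMissesSomeLetter α := by
  cases l with
  | nil => exact ⟨Classical.arbitrary α, List.not_mem_nil⟩
  | cons a t => exact ⟨a, (List.nodup_cons.1 hl).1⟩

section TailMissesSomeLetter

variable {α : Type*} [Fintype α] [DecidableEq α] [Nonempty α]

theorem mem_tailMissesSomeLetter_append_iff (a : α) (S T : Finset α) :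
    (if S = ∅ then [] else a :: Sᶜ.toList) ++ T.toList ∈ tailMissesSomeLetter α ↔
      S = ∅ ∨ ¬ S ⊆ T := by
  by_cases hS : S = ∅
  · simpa [hS] using (Finset.nodup_toList T).mem_tailMissesSomeLetter
  · simp [hS, Finset.not_subset]

theorem two_pow_card_le_card_of_accepts_eq {σ : Type*} [Fintype σ] {M : NFA α σ}
    (hM : M.Unambiguous) (hL : M.accepts = tailMissesSomeLetter α) :
    2 ^ Fintype.card α ≤ Fintype.card σ := by
  classical
  obtain ⟨a⟩ := ‹Nonempty α›
  have hrank := hM.rank_le_card (K := ℚ) (fun S : Finset α => if S = ∅ then [] else a :: Sᶜ.toList)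
    (fun T : Finset α => T.toList)
  simp only [hL, mem_tailMissesSomeLetter_append_iff] at hrank
  rwa [Matrix.rank_of_isUnit _ Matrix.isUnit_of_ite_eq_empty_or_not_subset,
    Fintype.card_finset] at hrank

end TailMissesSomeLetter

theorem NFA.Deterministic.unambiguous {α σ : Type*} {M : NFA α σ} (hM : M.Deterministic) :
    M.Unambiguous := by
  obtain ⟨⟨q₀, hstart⟩, hstep⟩ := hM
  intro w r₁ r₂ h₁ h₂
  funext i
  induction i using Fin.induction with
  | zero =>
    have e₁ := h₁.1
    have e₂ := h₂.1
    rw [hstart, Set.mem_singleton_iff] at e₁ e₂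
    rw [e₁, e₂]
  | succ j ih =>
    exact hstep _ _ (ih ▸ h₁.2.2 j) (h₂.2.2 j)

section SeenLetters

variable (α : Type*) [Fintype α] [DecidableEq α]

/-- The state is the set of letters read after the first one. No transition enters `univ`, so
`univ` doubles as the initial state. -/
def seenLettersNFA : NFA α (Finset α) where
  step S a := {T | T = (if S = Finset.univ then ∅ else insert a S) ∧ T ≠ Finset.univ}
  start := {Finset.univ}
  accept := Set.univ

variable {α}

theorem seenLettersNFA_deterministic : (seenLettersNFA α).Deterministic :=
  ⟨⟨Finset.univ, rfl⟩, fun _ _ _ h₁ _ h₂ => h₁.1.trans h₂.1.symm⟩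

theorem seenLettersNFA_evalFrom {S : Finset α} (hS : S ≠ Finset.univ) (w : List α) :
    (seenLettersNFA α).evalFrom {S} w = {T | T = S ∪ w.toFinset ∧ T ≠ Finset.univ} := by
  induction w generalizing S with
  | nil => ext T; simpa using fun hT => hT ▸ hS
  | cons a w ih =>
    have hunion : S ∪ (a :: w).toFinset = insert a S ∪ w.toFinset := by simp
    rw [NFA.evalFrom_cons, NFA.stepSet_singleton, hunion]
    by_cases haS : insert a S = Finset.univ
    · have hstep : (seenLettersNFA α).step S a = ∅ := by
        ext T; simp [seenLettersNFA, hS, haS]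
      rw [hstep, haS, NFA.evalFrom_eq_biUnion_singleton,
        Finset.union_eq_left.2 (Finset.subset_univ _)]
      ext T; simp
    · have hstep : (seenLettersNFA α).step S a = {insert a S} := by
        ext T; simpa [seenLettersNFA, hS] using fun hT => hT ▸ haS
      rw [hstep, ih haS]

theorem seenLettersNFA_accepts [Nonempty α] :
    (seenLettersNFA α).accepts = tailMissesSomeLetter α := by
  ext w
  rw [NFA.mem_accepts]
  rcases w with _ | ⟨a, t⟩
  · simp [seenLettersNFA]
  · have hstep : (seenLettersNFA α).step Finset.univ a = {∅} := by
      ext T; simpa [seenLettersNFA] using fun hT => hT ▸ Finset.univ_nonempty.ne_empty.symm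
    have hstart : (seenLettersNFA α).start = {Finset.univ} := rfl
    rw [NFA.evalFrom_cons, hstart, NFA.stepSet_singleton, hstep,
      seenLettersNFA_evalFrom Finset.univ_nonempty.ne_empty.symm]
    simp [seenLettersNFA, Finset.eq_univ_iff_forall]

end SeenLetters

theorem nU_tailMissesSomeLetter {α : Type} [Fintype α] [DecidableEq α] [Nonempty α] :
    nU (tailMissesSomeLetter α) = 2 ^ Fintype.card α := by
  have hmem : 2 ^ Fintype.card α ∈ {m | ∃ (σ : Type) (_ : Fintype σ) (M : NFA α σ),
      M.Unambiguous ∧ Fintype.card σ = m ∧ M.accepts = tailMissesSomeLetter α} :=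
    ⟨Finset α, inferInstance, seenLettersNFA α, seenLettersNFA_deterministic.unambiguous,
      Fintype.card_finset, seenLettersNFA_accepts⟩
  refine le_antisymm (Nat.sInf_le hmem) (le_csInf ⟨_, hmem⟩ ?_)
  rintro m ⟨σ, _, M, hM, rfl, hL⟩
  exact two_pow_card_le_card_of_accepts_eq hM hL

/-- Unambiguous state complexity of the downward-closed witness: over `Σ_n = Fin n`
(`n > 0`), with `D_n` the language of nonempty words whose first letter does not
reappear, every unambiguous automaton recognizing `↓D_n` has at least `2^n` states;
in fact `nU(↓D_n) = 2^n`. -/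
theorem nU_downClosure_D (n : ℕ) (hn : 0 < n) (D : Language (Fin n))
    (hD : D = {x | ∃ (a : Fin n) (w : List (Fin n)), x = a :: w ∧ a ∉ w}) :
    (∀ (σ : Type) [Fintype σ] (M : NFA (Fin n) σ),
      M.Unambiguous → M.accepts = downClosure D → 2 ^ n ≤ Fintype.card σ) ∧
    nU (downClosure D) = 2 ^ n := by
  have : Nonempty (Fin n) := ⟨⟨0, hn⟩⟩
  rw [hD, downClosure_eq_tailMissesSomeLetter]
  refine ⟨fun σ _ M hM hL => ?_, by rw [nU_tailMissesSomeLetter, Fintype.card_fin]⟩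
  simpa using two_pow_card_le_card_of_accepts_eq hM hL
end

section
/- Unambiguous state complexity of the upward-closed witness: for every n > 0, over the alphabet Σ_n = {a_1,…,a_n}, let E_n = {a a | a ∈ Σ_n}. Then every unambiguous finite automaton recognizing the upward closure ↑E_n (the set of all words over Σ_n in which some letter occurs at least twice) has at least 2^n + 1 states; in fact nU(↑E_n) = 2^n + 1. -/
/-!
`↑E_n` is the language of words with a repeated letter.

Lower bound (rank argument). For a UFA `M` and families of words `u i`, `v j`, the `0/1` matrix
`[u i ++ v j ∈ L(M)]` is the product `A * B` of the matrices `A i q = [q reachable on u i]` and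
`B q j = [v j accepted from q]`: by unambiguity at most one state `q` sits between `u i` and
`v j` on an accepting run. Hence its rank is at most the number of states. Take the rows
`S.toList` and columns `Tᶜ.toList` for subsets `S`, `T`, and the word `aa` once more on each
side: the entry for `(S, T)` is `[S ⊄ T]`, and all entries in the extra row and column are `1`.
The Schur complement of the bottom-right `1` is minus the inclusion matrix `[S ⊆ T]`, which is
unitriangular for the order by cardinality, so the matrix is invertible of size `2^n + 1`.

Upper bound. The DFA remembering the set of letters read so far, plus one accepting sink.
-/

namespace NFA

variable {α σ : Type*} (M : NFA α σ)

/-- As `IsAcceptingRun`, but without conditions on the first and last states. -/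
def IsRun (w : List α) (r : Fin (w.length + 1) → σ) : Prop :=
  ∀ i : Fin w.length, r i.succ ∈ M.step (r i.castSucc) (w.get i)

variable {M}

theorem isRun_cons {a : α} {w : List α} {p : σ} {r : Fin (w.length + 1) → σ} :
    M.IsRun (a :: w) (Fin.cons p r) ↔ r 0 ∈ M.step p a ∧ M.IsRun w r :=
  Fin.forall_fin_succ (n := w.length)

theorem exists_isRun_of_mem_evalFrom {S : Set σ} {w : List α} {q : σ}
    (h : q ∈ M.evalFrom S w) :
    ∃ r : Fin (w.length + 1) → σ, r 0 ∈ S ∧ M.IsRun w r ∧ r (Fin.last _) = q := by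
  induction w generalizing S with
  | nil => exact ⟨fun _ => q, h, nofun, rfl⟩
  | cons a w ih =>
    obtain ⟨r, hr0, hr, hrq⟩ := ih h
    obtain ⟨p, hp, hpr⟩ := M.mem_stepSet.1 hr0
    exact ⟨Fin.cons p r, hp, isRun_cons.2 ⟨hpr, hr⟩, hrq⟩

theorem exists_isRun_append {S : Set σ} {u v : List α} {q : σ} (hq : q ∈ M.evalFrom S u)
    {r' : Fin (v.length + 1) → σ} (hr' : M.IsRun v r') (hr'0 : r' 0 = q) :
    ∃ r : Fin ((u ++ v).length + 1) → σ, r 0 ∈ S ∧ M.IsRun (u ++ v) r ∧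
      r (Fin.last _) = r' (Fin.last _) ∧ r ⟨u.length, by simp⟩ = q := by
  induction u generalizing S with
  | nil => exact ⟨r', hr'0 ▸ hq, hr', rfl, hr'0⟩
  | cons a u ih =>
    obtain ⟨r, hr0, hr, hrlast, hrq⟩ := ih hq
    obtain ⟨p, hp, hpr⟩ := M.mem_stepSet.1 hr0
    exact ⟨Fin.cons p r, hp, isRun_cons.2 ⟨hpr, hr⟩, hrlast, hrq⟩

theorem Unambiguous.eq_of_mem_evalFrom (hM : M.Unambiguous) {u v : List α} {q q' : σ}
    (hq : q ∈ M.evalFrom M.start u) (hq' : q' ∈ M.evalFrom M.start u)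
    (hv : v ∈ M.acceptsFrom {q}) (hv' : v ∈ M.acceptsFrom {q'}) : q = q' := by
  obtain ⟨f, hf, hfv⟩ := hv
  obtain ⟨f', hf', hfv'⟩ := hv'
  obtain ⟨s, hs0, hs, hsf⟩ := exists_isRun_of_mem_evalFrom hfv
  obtain ⟨s', hs0', hs', hsf'⟩ := exists_isRun_of_mem_evalFrom hfv'
  obtain ⟨r, hr0, hr, hrf, hrq⟩ := exists_isRun_append hq hs hs0
  obtain ⟨r', hr0', hr', hrf', hrq'⟩ := exists_isRun_append hq' hs' hs0'
  have hrr' : r = r' := hM _ r r' ⟨hr0, hrf ▸ hsf ▸ hf, hr⟩ ⟨hr0', hrf' ▸ hsf' ▸ hf', hr'⟩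
  rw [← hrq, ← hrq', hrr']

theorem append_mem_accepts_iff_exists {u v : List α} :
    u ++ v ∈ M.accepts ↔ ∃ q ∈ M.evalFrom M.start u, v ∈ M.acceptsFrom {q} := by
  rw [accepts_eq_acceptsFrom_start, append_mem_acceptsFrom]
  simp only [mem_acceptsFrom, mem_evalFrom_iff_exists (S := M.evalFrom M.start u)]
  exact ⟨fun ⟨s, hs, q, hq, hsq⟩ => ⟨q, hq, s, hs, hsq⟩, fun ⟨q, hq, s, hs, hsq⟩ => ⟨s, hs, q, hq, hsq⟩⟩

theorem Deterministic.unambiguous_s19 (hM : M.Deterministic) : M.Unambiguous := by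
  obtain ⟨⟨q₀, hstart⟩, hstep⟩ := hM
  intro w r₁ r₂ h₁ h₂
  funext i
  induction i using Fin.induction with
  | zero => exact (hstart ▸ Set.subsingleton_singleton : M.start.Subsingleton) h₁.1 h₂.1
  | succ i ih => exact hstep _ _ (h₁.2.2 i) (ih ▸ h₂.2.2 i)

end NFA

theorem DFA.toNFA_deterministic {α σ : Type*} (M : DFA α σ) : M.toNFA.Deterministic :=
  ⟨⟨M.start, rfl⟩, fun _ _ => Set.subsingleton_singleton⟩

open Classical in
noncomputable def Language.concatMatrix {α ι κ : Type*} (R : Type*) [Zero R] [One R]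
    (L : Language α) (u : ι → List α) (v : κ → List α) : Matrix ι κ R :=
  Matrix.of fun i j => if u i ++ v j ∈ L then 1 else 0

namespace NFA.Unambiguous

variable {α σ ι κ : Type*} {M : NFA α σ} (R : Type*)

open Classical in
theorem concatMatrix_eq_mul [NonAssocSemiring R] [Fintype σ] (hM : M.Unambiguous)
    (u : ι → List α) (v : κ → List α) :
    M.accepts.concatMatrix R u v =
      Matrix.of (fun i q => if q ∈ M.evalFrom M.start (u i) then (1 : R) else 0) *
        Matrix.of fun q j => if v j ∈ M.acceptsFrom {q} then (1 : R) else 0 := by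
  ext i j
  set middle := Finset.univ.filter fun q => q ∈ M.evalFrom M.start (u i) ∧ v j ∈ M.acceptsFrom {q}
  have hmiddle : middle.card ≤ 1 := Finset.card_le_one.2 fun q hq q' hq' =>
    hM.eq_of_mem_evalFrom (Finset.mem_filter.1 hq).2.1 (Finset.mem_filter.1 hq').2.1
      (Finset.mem_filter.1 hq).2.2 (Finset.mem_filter.1 hq').2.2
  have hacc : u i ++ v j ∈ M.accepts ↔ middle.Nonempty := by
    simp [middle, append_mem_accepts_iff_exists, Finset.filter_nonempty_iff]
  simp only [Language.concatMatrix, Matrix.of_apply, Matrix.mul_apply, ite_zero_mul_ite_zero,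
    mul_one, Finset.sum_boole]
  by_cases h : u i ++ v j ∈ M.accepts
  · rw [if_pos h, le_antisymm hmiddle (Finset.card_pos.2 (hacc.1 h)), Nat.cast_one]
  · rw [if_neg h, Finset.card_eq_zero.2 (Finset.not_nonempty_iff_eq_empty.1 (mt hacc.2 h)),
      Nat.cast_zero]

theorem rank_concatMatrix_le [CommSemiring R] [StrongRankCondition R] [Fintype σ] [Fintype κ]
    (hM : M.Unambiguous) (u : ι → List α) (v : κ → List α) :
    (M.accepts.concatMatrix R u v).rank ≤ Fintype.card σ := by
  rw [hM.concatMatrix_eq_mul R]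
  exact (Matrix.rank_mul_le_left _ _).trans (Matrix.rank_le_card_width _)

end NFA.Unambiguous

section RepeatedLetter

variable {β : Type*} [Fintype β] [DecidableEq β] (R : Type*) [CommRing R]

open Matrix

def subsetMatrix : Matrix (Finset β) (Finset β) R := of fun S T => if S ⊆ T then 1 else 0

theorem det_subsetMatrix : (subsetMatrix (β := β) R).det = 1 := by
  have htri : (subsetMatrix (β := β) R).BlockTriangular Finset.card :=
    fun S T hlt => if_neg fun hST => (Finset.card_le_card hST).not_gt hlt
  rw [htri.det]
  refine Finset.prod_eq_one fun k _ => ?_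
  have hblock : (subsetMatrix (β := β) R).toSquareBlock Finset.card k = 1 := by
    ext ⟨S, hS⟩ ⟨T, hT⟩
    simp only [subsetMatrix, toSquareBlock_def, of_apply, one_apply, Subtype.mk.injEq]
    exact if_congr ⟨fun hST => Finset.eq_of_subset_of_card_le hST (hT.trans hS.symm).le,
      fun h => h ▸ subset_rfl⟩ rfl rfl
  rw [hblock, det_one]

noncomputable def foolingRowWord (a : β) : Finset β ⊕ Unit → List β
  | .inl S => S.toList
  | .inr _ => [a, a]

noncomputable def foolingColWord (a : β) : Finset β ⊕ Unit → List β
  | .inl T => Tᶜ.toList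
  | .inr _ => [a, a]

theorem concatMatrix_eq_fromBlocks_of_mem_iff_not_nodup {L : Language β}
    (hL : ∀ x, x ∈ L ↔ ¬ x.Nodup) (a : β) :
    L.concatMatrix R (foolingRowWord a) (foolingColWord a) =
      fromBlocks (of fun S T : Finset β => if S ⊆ T then (0 : R) else 1) (of fun _ _ => 1)
        (of fun _ _ => 1) (1 : Matrix Unit Unit R) := by
  ext (S | _) (T | _) <;>
    simp [Language.concatMatrix, foolingRowWord, foolingColWord, hL, List.nodup_append,
      Finset.nodup_toList, ← Finset.not_subset]

theorem rank_concatMatrix_of_mem_iff_not_nodup [Nontrivial R] {L : Language β}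
    (hL : ∀ x, x ∈ L ↔ ¬ x.Nodup) (a : β) :
    (L.concatMatrix R (foolingRowWord a) (foolingColWord a)).rank = 2 ^ Fintype.card β + 1 := by
  have hschur : (of fun S T : Finset β => if S ⊆ T then (0 : R) else 1) -
      (of fun _ _ => 1 : Matrix (Finset β) Unit R) * (of fun _ _ => 1 : Matrix Unit (Finset β) R) =
      -subsetMatrix R := by
    ext S T
    by_cases h : S ⊆ T <;> simp [subsetMatrix, h, mul_apply]
  have hunit : IsUnit (L.concatMatrix R (foolingRowWord a) (foolingColWord a)) := by
    rw [isUnit_iff_isUnit_det, concatMatrix_eq_fromBlocks_of_mem_iff_not_nodup R hL,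
      det_fromBlocks_one₂₂, hschur, det_neg, det_subsetMatrix, mul_one]
    exact (isUnit_neg_one (α := R)).pow _
  rw [rank_of_isUnit _ hunit, Fintype.card_sum, Fintype.card_finset, Fintype.card_unit]

end RepeatedLetter

theorem NFA.Unambiguous.card_ge_of_mem_accepts_iff_not_nodup {β σ : Type*} [Fintype β]
    [DecidableEq β] [Fintype σ] {M : NFA β σ} (hM : M.Unambiguous)
    (hL : ∀ x, x ∈ M.accepts ↔ ¬ x.Nodup) (a : β) :
    2 ^ Fintype.card β + 1 ≤ Fintype.card σ :=
  rank_concatMatrix_of_mem_iff_not_nodup ℚ hL a ▸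
    hM.rank_concatMatrix_le ℚ (foolingRowWord a) (foolingColWord a)

/-- Remembers the set of letters read so far; `none` is the sink reached by a repeated letter. -/
def repeatedLetterDFA (β : Type*) [DecidableEq β] : DFA β (Option (Finset β)) where
  step
    | some S, a => if a ∈ S then none else some (insert a S)
    | none, _ => none
  start := some ∅
  accept := {none}

namespace repeatedLetterDFA

variable {β : Type*} [DecidableEq β]

theorem step_some (S : Finset β) (a : β) :
    (repeatedLetterDFA β).step (some S) a = if a ∈ S then none else some (insert a S) :=
  rfl

theorem evalFrom_none (w : List β) : (repeatedLetterDFA β).evalFrom none w = none := by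
  induction w with
  | nil => rfl
  | cons a w ih => exact ih

theorem evalFrom_some_eq_none_iff (S : Finset β) (w : List β) :
    (repeatedLetterDFA β).evalFrom (some S) w = none ↔ ¬ (S.toList ++ w).Nodup := by
  induction w generalizing S with
  | nil => simp [Finset.nodup_toList]
  | cons a w ih =>
    rw [DFA.evalFrom_cons, step_some]
    by_cases ha : a ∈ S
    · simp only [if_pos ha, evalFrom_none, true_iff]
      exact fun h => List.disjoint_of_nodup_append h (Finset.mem_toList.2 ha) List.mem_cons_self
    · rw [if_neg ha, ih, ((Finset.toList_insert ha).append_right w).nodup_iff,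
        List.perm_middle.nodup_iff]
      rfl

theorem mem_accepts_iff (x : List β) : x ∈ (repeatedLetterDFA β).accepts ↔ ¬ x.Nodup := by
  have h := evalFrom_some_eq_none_iff (∅ : Finset β) x
  rw [Finset.toList_empty, List.nil_append] at h
  exact Set.mem_singleton_iff.trans h

end repeatedLetterDFA

theorem mem_upClosure_pairs_iff {α : Type} (x : List α) :
    x ∈ upClosure {w | ∃ a, w = [a, a]} ↔ ¬ x.Nodup := by
  simp only [List.nodup_iff_sublist, not_forall, not_not]
  exact ⟨fun ⟨_, ⟨a, ha⟩, hx⟩ => ⟨a, ha ▸ hx⟩, fun ⟨a, hx⟩ => ⟨_, ⟨a, rfl⟩, hx⟩⟩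

theorem nU_eq_of_forall_le {α : Type} {L : Language α} {k : ℕ}
    (hle : ∀ (σ : Type) [Fintype σ] (M : NFA α σ), M.Unambiguous → M.accepts = L →
      k ≤ Fintype.card σ)
    {σ : Type} [Fintype σ] {M : NFA α σ} (hM : M.Unambiguous) (hcard : Fintype.card σ = k)
    (hL : M.accepts = L) : nU L = k :=
  le_antisymm (Nat.sInf_le ⟨σ, _, M, hM, hcard, hL⟩)
    (le_csInf ⟨k, σ, _, M, hM, hcard, hL⟩ fun _ ⟨σ', _, M', hM', hcard', hL'⟩ =>
      hcard' ▸ hle σ' M' hM' hL')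

/-- Unambiguous state complexity of the upward-closed witness: over `Σ_n = Fin n`
(`n > 0`), with `E_n = { aa | a ∈ Σ_n }`, every unambiguous automaton recognizing
`↑E_n` has at least `2^n + 1` states; in fact `nU(↑E_n) = 2^n + 1`. -/
theorem nU_upClosure_E (n : ℕ) (hn : 0 < n) (E : Language (Fin n))
    (hE : E = {w | ∃ a : Fin n, w = [a, a]}) :
    (∀ (σ : Type) [Fintype σ] (M : NFA (Fin n) σ),
      M.Unambiguous → M.accepts = upClosure E → 2 ^ n + 1 ≤ Fintype.card σ) ∧
    nU (upClosure E) = 2 ^ n + 1 := by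
  subst hE
  have hle : ∀ (σ : Type) [Fintype σ] (M : NFA (Fin n) σ),
      M.Unambiguous → M.accepts = upClosure {w | ∃ a : Fin n, w = [a, a]} →
        2 ^ n + 1 ≤ Fintype.card σ := fun σ _ M hM hL => by
    simpa using hM.card_ge_of_mem_accepts_iff_not_nodup (fun x => hL ▸ mem_upClosure_pairs_iff x)
      ⟨0, hn⟩
  have hDFA : (repeatedLetterDFA (Fin n)).toNFA.accepts = upClosure {w | ∃ a, w = [a, a]} := by
    ext x
    rw [DFA.toNFA_correct, repeatedLetterDFA.mem_accepts_iff, mem_upClosure_pairs_iff]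
  exact ⟨hle, nU_eq_of_forall_le hle (DFA.toNFA_deterministic _).unambiguous_s19 (by simp) hDFA⟩
end
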